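/- Let 0 < A < B < ∞, 0 < M < ∞ and r > 1. Suppose D₁, D₂, …, D_N are pairwise disjoint simply connected domains, each contained in ℂ ∖ {0}, such that ∫_{r^A}^{r^B} π/(t·θ_{D_j}(t)) dt ≤ M·log r for each j = 1, …, N. Then N·(B − A) ≤ 2M. -/

import Mathlib

open Complex Set Filter MeasureTheory Topology
open scoped ENNReal

noncomputable section

/-- The open upper half-plane, as a subset of `ℂ`. -/
def UHP : Set ℂ := {z : ℂ | 0 < z.im}

/-- A real entire function: entire, mapping `ℝ` into `ℝ`. -/
def RealEntire (f : ℂ → ℂ) : Prop :=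
  Differentiable ℂ f ∧ ∀ x : ℝ, (f (x : ℂ)).im = 0

/-- A function is transcendental if it is not a polynomial. -/
def TranscendentalFun (f : ℂ → ℂ) : Prop :=
  ¬ ∃ p : Polynomial ℂ, ∀ z : ℂ, f z = p.eval z

/-- The maximum modulus `M(r, f)`. -/
def maxMod (f : ℂ → ℂ) (r : ℝ) : ℝ :=
  sSup ((fun z => ‖f z‖) '' Metric.sphere (0 : ℂ) r)

/-- `f` has infinite order: `limsup (log log M(r,f)) / log r = ∞`. -/
def InfiniteOrder (f : ℂ → ℂ) : Prop :=
  ∀ c r₀ : ℝ, ∃ r : ℝ, r₀ ≤ r ∧ c * Real.log r < Real.log (Real.log (maxMod f r))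

/-- `f` has only finitely many non-real zeros. -/
def FinitelyManyNonRealZeros (f : ℂ → ℂ) : Prop :=
  {z : ℂ | z.im ≠ 0 ∧ f z = 0}.Finite

open Classical in
/-- The order of a meromorphic function at a point (junk value `0` if not meromorphic there). -/
def merOrder (g : ℂ → ℂ) (z : ℂ) : WithTop ℤ :=
  if h : MeromorphicAt g z then meromorphicOrderAt g z else 0

/-- Multiplicity of `z` as a zero of `g` (0 if not a zero). -/
def zeroMult (g : ℂ → ℂ) (z : ℂ) : ℕ := ((WithTop.untopD 0 (merOrder g z))).toNat

/-- Multiplicity of `z` as a pole of `g` (0 if not a pole). -/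
def poleMult (g : ℂ → ℂ) (z : ℂ) : ℕ := (-(WithTop.untopD 0 (merOrder g z))).toNat

/-- `g` has a pole at `z`. -/
def IsPoleAt (g : ℂ → ℂ) (z : ℂ) : Prop := MeromorphicAt g z ∧ merOrder g z < 0

/-- The Weierstrass primary factor `E_q(w)`. -/
def weierstrassE (q : ℕ) (w : ℂ) : ℂ :=
  (1 - w) * Complex.exp (∑ k ∈ Finset.range q, w ^ (k + 1) / ((k : ℂ) + 1))

/-- A real entire function with only real zeros, of genus at most `2p+1`,
written in Hadamard product form. -/
def GenusForm (p : ℕ) (g : ℂ → ℂ) : Prop :=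
  ∃ (c : ℝ) (μ : ℕ) (Q : Polynomial ℝ) (q : ℕ) (ι : Type) (a : ι → ℝ),
    Countable ι ∧ c ≠ 0 ∧ Q.natDegree ≤ 2 * p + 1 ∧ q ≤ 2 * p + 1 ∧
    (∀ i, a i ≠ 0) ∧ Summable (fun i => |a i| ^ (-((q : ℝ) + 1))) ∧
    ∀ z : ℂ, g z = (c : ℂ) * z ^ μ * Complex.exp ((Q.map (algebraMap ℝ ℂ)).eval z) *
      ∏' i, weierstrassE q (z / (a i : ℂ))

/-- The class `V_{2p}`. -/
def VClass (p : ℕ) : Set (ℂ → ℂ) :=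
  {f | ∃ (a : ℝ) (g : ℂ → ℂ), 0 ≤ a ∧ Differentiable ℂ g ∧ GenusForm p g ∧
    ∀ z : ℂ, f z = g z * Complex.exp (-(a : ℂ) * z ^ (2 * p + 2))}

/-- The class `U_{2p}`: `U_0 = V_0`, `U_{2p} = V_{2p} \ V_{2p-2}` for `p ≥ 1`. -/
def UClass (p : ℕ) : Set (ℂ → ℂ) :=
  if p = 0 then VClass 0 else VClass p \ VClass (p - 1)

/-- The class `U_{2p}^*`: functions `f = P·h` with `h ∈ U_{2p}` and `P` a real
polynomial without real zeros. -/
def UStarClass (p : ℕ) : Set (ℂ → ℂ) :=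
  {f | ∃ (P : Polynomial ℝ) (h : ℂ → ℂ), (∀ x : ℝ, P.eval x ≠ 0) ∧ h ∈ UClass p ∧
    ∀ z : ℂ, f z = (P.map (algebraMap ℝ ℂ)).eval z * h z}

/-- Positive part of the logarithm. -/
def posLog (x : ℝ) : ℝ := max (Real.log x) 0

/-- `𝔫(t, g)`: number of poles of `g`, with multiplicity, in `{z : |z - it/2| ≤ t/2, |z| ≥ 1}`. -/
def tsujiSmalln (g : ℂ → ℂ) (t : ℝ) : ℝ :=
  ∑' z : {z : ℂ | ‖z - Complex.I * (t / 2)‖ ≤ t / 2 ∧ 1 ≤ ‖z‖},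
    (poleMult g z : ℝ)

/-- `𝔑(r, g)`. -/
def tsujiBigN (g : ℂ → ℂ) (r : ℝ) : ℝ :=
  ∫ t in (1 : ℝ)..r, tsujiSmalln g t / t ^ 2

/-- `𝔪(r, g)`. -/
def tsujiM (g : ℂ → ℂ) (r : ℝ) : ℝ :=
  (2 * Real.pi)⁻¹ * ∫ θ in Real.arcsin (1 / r)..(Real.pi - Real.arcsin (1 / r)),
    posLog ‖g ((r * Real.sin θ : ℝ) * Complex.exp (θ * Complex.I))‖ /
      (r * Real.sin θ ^ 2)

/-- The Tsuji characteristic `𝔗(r, g) = 𝔪(r, g) + 𝔑(r, g)`. -/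
def tsujiT (g : ℂ → ℂ) (r : ℝ) : ℝ := tsujiM g r + tsujiBigN g r

/-- `𝔗(r, g) = O(log r)` as `r → ∞`. -/
def TsujiLogBounded (g : ℂ → ℂ) : Prop :=
  ∃ C r₀ : ℝ, ∀ r : ℝ, r₀ ≤ r → tsujiT g r ≤ C * Real.log r

/-- `g` has at least `n` zeros, counted with multiplicity, in the set `S`. -/
def ZerosAtLeast (g : ℂ → ℂ) (S : Set ℂ) (n : ℕ) : Prop :=
  ∃ (zs : Finset ℂ) (m : ℂ → ℕ),
    (↑zs : Set ℂ) ⊆ S ∧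
    (∀ z ∈ zs, 1 ≤ m z ∧ ∀ k < m z, iteratedDeriv k g z = 0) ∧
    n ≤ ∑ z ∈ zs, m z

/-- The logarithmic derivative `L = f'/f`. -/
def Lfun (f : ℂ → ℂ) : ℂ → ℂ := fun z => deriv f z / f z

/-- The auxiliary function `F = (T·L − 1)/(L + T)`, `T = tan`. -/
def Ffun (f : ℂ → ℂ) : ℂ → ℂ := fun z =>
  (Complex.tan z * Lfun f z - 1) / (Lfun f z + Complex.tan z)

/-- The auxiliary function `s_a = T·(F − a)/(T − F)`. -/
def sfun (f : ℂ → ℂ) (a : ℂ) : ℂ → ℂ := fun z =>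
  Complex.tan z * (Ffun f z - a) / (Complex.tan z - Ffun f z)

/-! For each radius `t` the angle sets of the `D_j` on the circle `|z| = t` are disjoint subsets
of `[0, 2π)`, so `∑ θ_{D_j}(t) ≤ 2π`, and by Cauchy–Schwarz `∑ 1/θ_{D_j}(t) ≥ N²/(2π)`. Hence
`∑_j π/(t θ_{D_j}(t)) ≥ N²/(2t)`; integrating over `[r^A, r^B]` and using the hypothesis for each `j`
gives `N² (B - A) log r / 2 ≤ N M log r`. -/

open Function
open scoped NNReal

theorem ENNReal.card_sq_div_sum_le_sum_inv {ι : Type*} (s : Finset ι) (u : ι → ℝ≥0∞) :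
    (s.card : ℝ≥0∞) ^ 2 / ∑ i ∈ s, u i ≤ ∑ i ∈ s, (u i)⁻¹ := by
  by_cases hzero : ∃ i ∈ s, u i = 0
  · obtain ⟨i, hi, hui⟩ := hzero
    have : ∑ i ∈ s, (u i)⁻¹ = ⊤ := ENNReal.sum_eq_top.2 ⟨i, hi, by simp [hui]⟩
    simp [this]
  by_cases htop : ∃ i ∈ s, u i = ⊤
  · simp [ENNReal.sum_eq_top.2 htop]
  push Not at hzero htop
  rcases s.eq_empty_or_nonempty with rfl | hs
  · simp
  set v : ι → ℝ≥0 := fun i => (u i).toNNReal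
  have hv : ∀ i ∈ s, 0 < v i := fun i hi =>
    ENNReal.toNNReal_pos (hzero i hi) (htop i hi)
  have huv : ∀ i ∈ s, u i = v i := fun i hi => (ENNReal.coe_toNNReal (htop i hi)).symm
  have hsum : (0 : ℝ≥0) < ∑ i ∈ s, v i := Finset.sum_pos hv hs
  have hsum_u : ∑ i ∈ s, u i = ↑(∑ i ∈ s, v i) := by
    rw [ENNReal.ofNNReal_finsetSum]; exact Finset.sum_congr rfl huv
  have hsum_inv : ∑ i ∈ s, (u i)⁻¹ = ↑(∑ i ∈ s, (v i)⁻¹) := by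
    rw [ENNReal.ofNNReal_finsetSum]
    exact Finset.sum_congr rfl fun i hi => by rw [huv i hi, ENNReal.coe_inv (hv i hi).ne']
  rw [hsum_u, hsum_inv, ← ENNReal.coe_natCast, ← ENNReal.coe_pow,
    ← ENNReal.coe_div hsum.ne', ENNReal.coe_le_coe]
  simpa using Finset.sq_sum_div_le_sum_sq_div s (fun _ => (1 : ℝ≥0)) hv

/-- The set of angles `θ ∈ [0, 2π)` with `t e^{iθ} ∈ D`; its measure is the paper's `θ_D(t)`. -/
def angleSet (D : Set ℂ) (t : ℝ) : Set ℝ :=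
  {θ : ℝ | θ ∈ Set.Ico 0 (2 * Real.pi) ∧ (t : ℂ) * Complex.exp ((θ : ℂ) * Complex.I) ∈ D}

def angularMeasure (D : Set ℂ) (t : ℝ) : ℝ≥0∞ := volume (angleSet D t)

theorem measurableSet_angleSet {D : Set ℂ} (hD : MeasurableSet D) (t : ℝ) :
    MeasurableSet (angleSet D t) :=
  measurableSet_Ico.inter (hD.preimage (by fun_prop))

theorem angularMeasure_le (D : Set ℂ) (t : ℝ) :
    angularMeasure D t ≤ ENNReal.ofReal (2 * Real.pi) :=
  (measure_mono fun _ h => h.1).trans_eq (by rw [Real.volume_Ico, sub_zero])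

theorem measurable_angularMeasure {D : Set ℂ} (hD : MeasurableSet D) :
    Measurable (angularMeasure D) := by
  have hpolar : Continuous fun p : ℝ × ℝ => (p.1 : ℂ) * Complex.exp ((p.2 : ℂ) * Complex.I) := by
    fun_prop
  exact measurable_measure_prodMk_left
    ((measurable_snd measurableSet_Ico).inter (hD.preimage hpolar.measurable))

theorem sum_angularMeasure_le {ι : Type*} [Fintype ι] {D : ι → Set ℂ}
    (hD : ∀ i, MeasurableSet (D i)) (hdisj : Pairwise (Disjoint on D)) (t : ℝ) :
    ∑ i, angularMeasure (D i) t ≤ ENNReal.ofReal (2 * Real.pi) := by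
  have hdisj' : Set.PairwiseDisjoint (Finset.univ : Finset ι) fun i => angleSet (D i) t :=
    fun i _ j _ hij => Set.disjoint_left.2 fun _ hi hj => Set.disjoint_left.1 (hdisj hij) hi.2 hj.2
  calc ∑ i, angularMeasure (D i) t = volume (⋃ i ∈ Finset.univ, angleSet (D i) t) :=
        (measure_biUnion_finset hdisj' fun i _ => measurableSet_angleSet (hD i) t).symm
    _ ≤ volume (Set.Ico 0 (2 * Real.pi)) := measure_mono (Set.iUnion₂_subset fun _ _ _ h => h.1)
    _ = ENNReal.ofReal (2 * Real.pi) := by rw [Real.volume_Ico, sub_zero]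

theorem card_sq_div_two_mul_inv_le_sum_pi_div_angularMeasure {ι : Type*} [Fintype ι]
    {D : ι → Set ℂ} (hD : ∀ i, MeasurableSet (D i)) (hdisj : Pairwise (Disjoint on D)) (t : ℝ) :
    (Fintype.card ι : ℝ≥0∞) ^ 2 / 2 * (ENNReal.ofReal t)⁻¹ ≤
      ∑ i, ENNReal.ofReal Real.pi / (ENNReal.ofReal t * angularMeasure (D i) t) := by
  have hπ : ENNReal.ofReal Real.pi ≠ 0 := ENNReal.ofReal_ne_zero_iff.2 Real.pi_pos
  have hsplit : ∀ i, ENNReal.ofReal Real.pi / (ENNReal.ofReal t * angularMeasure (D i) t) =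
      ENNReal.ofReal Real.pi * (angularMeasure (D i) t)⁻¹ * (ENNReal.ofReal t)⁻¹ := fun i => by
    rw [div_eq_mul_inv, ENNReal.mul_inv
      (Or.inr (ne_top_of_le_ne_top ENNReal.ofReal_ne_top (angularMeasure_le _ _)))
      (Or.inl ENNReal.ofReal_ne_top)]
    ring
  calc (Fintype.card ι : ℝ≥0∞) ^ 2 / 2 * (ENNReal.ofReal t)⁻¹
      = ENNReal.ofReal Real.pi * ((Fintype.card ι : ℝ≥0∞) ^ 2 / ENNReal.ofReal (2 * Real.pi)) *
          (ENNReal.ofReal t)⁻¹ := by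
        rw [ENNReal.ofReal_mul zero_le_two, ENNReal.ofReal_ofNat, ← mul_div_assoc,
          mul_comm 2, ENNReal.mul_div_mul_left _ _ hπ ENNReal.ofReal_ne_top]
    _ ≤ ENNReal.ofReal Real.pi * (∑ i, (angularMeasure (D i) t)⁻¹) * (ENNReal.ofReal t)⁻¹ := by
        gcongr
        calc _ ≤ (Finset.univ.card : ℝ≥0∞) ^ 2 / ∑ i, angularMeasure (D i) t :=
              ENNReal.div_le_div_left (sum_angularMeasure_le hD hdisj t) _
          _ ≤ _ := ENNReal.card_sq_div_sum_le_sum_inv _ _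
    _ = _ := by simp only [hsplit, Finset.mul_sum, Finset.sum_mul]

theorem lintegral_inv_ofReal_Icc {a b : ℝ} (ha : 0 < a) (hab : a ≤ b) :
    ∫⁻ t in Set.Icc a b, (ENNReal.ofReal t)⁻¹ = ENNReal.ofReal (Real.log (b / a)) := by
  have hIcc : ∀ t ∈ Set.Icc a b, 0 < t := fun t ht => ha.trans_le ht.1
  have hinv : IntegrableOn (fun t : ℝ => t⁻¹) (Set.Icc a b) :=
    (continuousOn_inv₀.mono fun t ht => (hIcc t ht).ne').integrableOn_Icc
  rw [setLIntegral_congr_fun measurableSet_Icc fun t ht => (ENNReal.ofReal_inv_of_pos (hIcc t ht)).symm,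
    ← ofReal_integral_eq_lintegral_ofReal hinv
      ((ae_restrict_iff' measurableSet_Icc).2 (.of_forall fun t ht => (inv_pos.2 (hIcc t ht)).le)),
    integral_Icc_eq_integral_Ioc, ← intervalIntegral.integral_of_le hab,
    integral_inv_of_pos ha (ha.trans_le hab)]

theorem card_sq_div_two_mul_log_le_sum_lintegral {ι : Type*} [Fintype ι] {D : ι → Set ℂ}
    (hD : ∀ i, MeasurableSet (D i)) (hdisj : Pairwise (Disjoint on D)) {a b : ℝ} (ha : 0 < a)
    (hab : a ≤ b) :
    (Fintype.card ι : ℝ≥0∞) ^ 2 / 2 * ENNReal.ofReal (Real.log (b / a)) ≤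
      ∑ i, ∫⁻ t in Set.Icc a b,
        ENNReal.ofReal Real.pi / (ENNReal.ofReal t * angularMeasure (D i) t) := by
  have hmeas : ∀ i, Measurable fun t : ℝ =>
      ENNReal.ofReal Real.pi / (ENNReal.ofReal t * angularMeasure (D i) t) := fun i =>
    measurable_const.div (ENNReal.measurable_ofReal.mul (measurable_angularMeasure (hD i)))
  rw [← lintegral_inv_ofReal_Icc ha hab, ← lintegral_const_mul' _ _ (by finiteness),
    ← lintegral_finsetSum _ fun i _ => hmeas i]
  exact lintegral_mono (card_sq_div_two_mul_inv_le_sum_pi_div_angularMeasure hD hdisj)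

theorem stmt2_general (A B M r : ℝ) (hAB : A < B) (hM : 0 < M) (hr : 1 < r)
    (N : ℕ) (D : Fin N → Set ℂ)
    (hdisj : ∀ i j, i ≠ j → Disjoint (D i) (D j))
    (hopen : ∀ j, IsOpen (D j))
    (hint : ∀ j, (∫⁻ t in Set.Icc (r ^ A) (r ^ B),
        ENNReal.ofReal Real.pi /
          (ENNReal.ofReal t *
            volume {θ : ℝ | θ ∈ Set.Ico 0 (2 * Real.pi) ∧
              (t : ℂ) * Complex.exp ((θ : ℂ) * Complex.I) ∈ D j}))
        ≤ ENNReal.ofReal (M * Real.log r)) :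
    (N : ℝ) * (B - A) ≤ 2 * M := by
  have hr0 : 0 < r := one_pos.trans hr
  have hlog : 0 < Real.log r := Real.log_pos hr
  have hbound := (card_sq_div_two_mul_log_le_sum_lintegral (fun j => (hopen j).measurableSet)
    hdisj (Real.rpow_pos_of_pos hr0 A) (Real.rpow_le_rpow_of_exponent_le hr.le hAB.le)).trans
    (Finset.sum_le_sum fun j _ => hint j)
  rw [← Real.rpow_sub hr0, Real.log_rpow hr0, Finset.sum_const, Finset.card_univ, nsmul_eq_mul,
    ← ENNReal.ofReal_natCast, ← ENNReal.ofReal_pow (Nat.cast_nonneg _),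
    ← ENNReal.ofReal_ofNat 2, ← ENNReal.ofReal_div_of_pos two_pos,
    ← ENNReal.ofReal_mul (by positivity), ← ENNReal.ofReal_mul (Nat.cast_nonneg _),
    ENNReal.ofReal_le_ofReal_iff (by positivity), Fintype.card_fin] at hbound
  rcases N.eq_zero_or_pos with hN | hN
  · simp only [hN, CharP.cast_eq_zero, zero_mul]
    positivity
  have hNlog : 0 < (N : ℝ) * Real.log r / 2 := by positivity
  exact le_of_mul_le_mul_right (by linear_combination hbound) hNlog

theorem stmt2 (A B M r : ℝ) (hA : 0 < A) (hAB : A < B) (hM : 0 < M) (hr : 1 < r)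
    (N : ℕ) (D : Fin N → Set ℂ)
    (hdisj : ∀ i j, i ≠ j → Disjoint (D i) (D j))
    (hopen : ∀ j, IsOpen (D j)) (hconn : ∀ j, IsConnected (D j))
    (hsc : ∀ j, SimplyConnectedSpace ↥(D j))
    (hsub : ∀ j, D j ⊆ {(0 : ℂ)}ᶜ)
    (hint : ∀ j, (∫⁻ t in Set.Icc (r ^ A) (r ^ B),
        ENNReal.ofReal Real.pi /
          (ENNReal.ofReal t *
            volume {θ : ℝ | θ ∈ Set.Ico 0 (2 * Real.pi) ∧
              (t : ℂ) * Complex.exp ((θ : ℂ) * Complex.I) ∈ D j}))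
        ≤ ENNReal.ofReal (M * Real.log r)) :
    (N : ℝ) * (B - A) ≤ 2 * M :=
  stmt2_general A B M r hAB hM hr N D hdisj hopen hint

end
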